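/- Let R be an n×n real matrix with zero diagonal. A = max_{λ ∈ Δ} min_σ Σ_i λ_i · R i (σ i) = 0 if and only if there exist scalars v_i and nonnegative weights λ_i, not all zero, such that v_j − v_i ≤ λ_i · R i j for all i, j. -/

import Mathlib

/-!
If some weight vector `w` in the simplex gives every permutation `σ` a nonnegative weighted cost
`∑ i, w i * R i (σ i)`, then every simple cycle of the complete digraph with edge costs
`c i j = w i * R i j` has nonnegative cost: it is the cost of the permutation `List.formPerm`
traced by the cycle, whose other points are fixed and cost `c i i = 0`. Without negative cycles,
least costs of simple paths ending at `j` form potentials: `v j - v i ≤ c i j`. Conversely,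
potentials telescope along any permutation. Compactness of the simplex turns `sup = 0` into
`0` being attained, and the weights of a potential can be rescaled into the simplex.
-/

open Finset

theorem List.map_formPerm_eq_rotate_one {α : Type*} [DecidableEq α] {l : List α} (hl : l.Nodup) :
    l.map l.formPerm = l.rotate 1 :=
  List.ext_getElem (by simp) fun k _ _ => by
    rw [List.getElem_map, List.formPerm_apply_getElem _ hl, List.getElem_rotate]

section Walks

variable {α : Type*} (c : α → α → ℝ)

def walkCost : List α → ℝ
  | a :: b :: l => c a b + walkCost (b :: l)
  | _ => 0

@[simp] lemma walkCost_singleton (a : α) : walkCost c [a] = 0 := rfl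

@[simp] lemma walkCost_cons_cons (a b : α) (l : List α) :
    walkCost c (a :: b :: l) = c a b + walkCost c (b :: l) := rfl

lemma walkCost_cons_append_singleton (a : α) (l : List α) (b : α) :
    walkCost c (a :: l ++ [b]) = (List.zipWith c (a :: l) (l ++ [b])).sum := by
  induction l generalizing a with
  | nil => simp
  | cons d l ih => simpa using ih d

lemma walkCost_append_cons (l₁ : List α) (x : α) (l₂ : List α) :
    walkCost c (l₁ ++ x :: l₂) = walkCost c (l₁ ++ [x]) + walkCost c (x :: l₂) := by
  induction l₁ with
  | nil => simp
  | cons a l₁ ih =>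
    cases l₁ with
    | nil => simp
    | cons b l₁ =>
      simp only [List.cons_append, walkCost_cons_cons] at ih ⊢
      rw [ih, add_assoc]

lemma walkCost_cycle_eq_sum_formPerm [Fintype α] [DecidableEq α] (hc : ∀ i, c i i = 0)
    {x : α} {l : List α} (hl : (x :: l).Nodup) :
    walkCost c (x :: l ++ [x]) = ∑ i, c i ((x :: l).formPerm i) := by
  have hfix : ∀ i ∉ (x :: l).toFinset, c i ((x :: l).formPerm i) = 0 := fun i hi => by
    rw [List.formPerm_apply_of_notMem (by simpa using hi), hc]
  have hrot : l ++ [x] = (x :: l).rotate 1 := by simp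
  rw [← sum_subset (subset_univ _) fun i _ => hfix i, List.sum_toFinset _ hl,
    walkCost_cons_append_singleton, hrot, ← List.map_formPerm_eq_rotate_one hl,
    List.zipWith_map_right, List.zipWith_self]

variable {c}

lemma exists_nodup_walkCost_le (hcyc : ∀ x l, (x :: l).Nodup → 0 ≤ walkCost c (x :: l ++ [x]))
    {l : List α} (hl : l.Nodup) (j : α) :
    ∃ l', (l' ++ [j]).Nodup ∧ walkCost c (l' ++ [j]) ≤ walkCost c (l ++ [j]) := by
  by_cases hj : j ∈ l
  · obtain ⟨l₁, l₂, rfl⟩ := List.append_of_mem hj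
    have hsplit : l₁ ++ j :: l₂ ++ [j] = l₁ ++ j :: (l₂ ++ [j]) := by simp
    refine ⟨l₁, hl.sublist (by simp), ?_⟩
    rw [hsplit, walkCost_append_cons c l₁ j (l₂ ++ [j])]
    exact le_add_of_nonneg_right (hcyc j l₂ (hl.sublist (by simp)))
  · exact ⟨l, hl.append (by simp) (by simpa using hj), le_rfl⟩

lemma exists_potential_of_cycle_nonneg [Fintype α]
    (hcyc : ∀ x l, (x :: l).Nodup → 0 ≤ walkCost c (x :: l ++ [x])) :
    ∃ v : α → ℝ, ∀ i j, v j - v i ≤ c i j := by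
  have hfin (j : α) : {l : List α | (l ++ [j]).Nodup}.Finite :=
    (List.finite_length_le α (Fintype.card α)).subset fun l hl =>
      Nat.le_of_lt (by simpa using List.Nodup.length_le_card hl)
  -- `p j ++ [j]` is a cheapest simple path ending at `j`
  choose p hp hmin using fun j =>
    Set.exists_min_image _ (fun l => walkCost c (l ++ [j])) (hfin j) ⟨[], by simp⟩
  refine ⟨fun j => walkCost c (p j ++ [j]), fun i j => ?_⟩
  obtain ⟨l, hl, hle⟩ := exists_nodup_walkCost_le hcyc (hp i) j
  have hstep : walkCost c (p i ++ [i] ++ [j]) = walkCost c (p i ++ [i]) + c i j := by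
    rw [List.append_assoc, List.singleton_append, walkCost_append_cons]
    simp
  linarith [hmin j l hl]

lemma exists_potential_iff_forall_perm_sum_nonneg [Fintype α] [DecidableEq α]
    (hc : ∀ i, c i i = 0) :
    (∃ v : α → ℝ, ∀ i j, v j - v i ≤ c i j) ↔ ∀ σ : Equiv.Perm α, 0 ≤ ∑ i, c i (σ i) := by
  constructor
  · rintro ⟨v, hv⟩ σ
    calc 0 = ∑ i, (v (σ i) - v i) := by rw [sum_sub_distrib, Equiv.sum_comp, sub_self]
      _ ≤ ∑ i, c i (σ i) := sum_le_sum fun i _ => hv i (σ i)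
  · intro hσ
    refine exists_potential_of_cycle_nonneg fun x l hl => ?_
    rw [walkCost_cycle_eq_sum_formPerm c hc hl]
    exact hσ _

end Walks

lemma IsCompact.sSup_eq_iff_mem {S : Set ℝ} (hS : IsCompact S) (hne : S.Nonempty) {a : ℝ}
    (hub : ∀ x ∈ S, x ≤ a) : sSup S = a ↔ a ∈ S :=
  ⟨fun h => h ▸ hS.sSup_mem hne, fun h => IsGreatest.csSup_eq ⟨h, hub⟩⟩

section AssignmentMin

variable {ι : Type*} [Fintype ι] [DecidableEq ι] (R : ι → ι → ℝ)

noncomputable def assignmentMin (w : ι → ℝ) : ℝ :=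
  univ.inf' univ_nonempty fun σ : Equiv.Perm ι => ∑ i, w i * R i (σ i)

lemma inf'_perm_sum_eq_assignmentMin (w : ι → ℝ) (h : (univ : Finset (Equiv.Perm ι)).Nonempty) :
    univ.inf' h (fun σ : Equiv.Perm ι => ∑ i, w i * R i (σ i)) = assignmentMin R w :=
  rfl

lemma assignmentMin_le_zero (hR : ∀ i, R i i = 0) (w : ι → ℝ) : assignmentMin R w ≤ 0 :=
  (inf'_le _ (mem_univ 1)).trans_eq (by simp [hR])

lemma continuous_assignmentMin : Continuous (assignmentMin R) :=
  Continuous.finset_inf'_apply _ fun _ _ => by fun_prop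

lemma zero_le_assignmentMin_iff {w : ι → ℝ} :
    0 ≤ assignmentMin R w ↔ ∀ σ : Equiv.Perm ι, 0 ≤ ∑ i, w i * R i (σ i) := by
  simp [assignmentMin, le_inf'_iff]

lemma sSup_image_assignmentMin_eq_zero_iff [Nonempty ι] (hR : ∀ i, R i i = 0) :
    sSup (assignmentMin R '' stdSimplex ℝ ι) = 0 ↔
      ∃ w ∈ stdSimplex ℝ ι, ∀ σ : Equiv.Perm ι, 0 ≤ ∑ i, w i * R i (σ i) := by
  obtain ⟨i⟩ := ‹Nonempty ι›
  rw [((isCompact_stdSimplex ℝ ι).image (continuous_assignmentMin R)).sSup_eq_iff_mem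
    ((Set.nonempty_of_mem (single_mem_stdSimplex ℝ i)).image _)
    (Set.forall_mem_image.2 fun w _ => assignmentMin_le_zero R hR w)]
  refine exists_congr fun w => and_congr_right fun _ => ?_
  rw [← zero_le_assignmentMin_iff]
  exact ⟨fun h => h.ge, fun h => (assignmentMin_le_zero R hR w).antisymm h⟩

end AssignmentMin

/-- A = 0 iff Afriat inequalities hold with nonnegative weights, not all zero. -/
theorem stmt_14 {n : ℕ} (hn : 0 < n) (R : Fin n → Fin n → ℝ) (hdiag : ∀ i, R i i = 0) :
    sSup {x : ℝ | ∃ w : Fin n → ℝ, (∀ i, 0 ≤ w i) ∧ (∑ i, w i = 1) ∧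
        x = Finset.univ.inf' (Finset.univ_nonempty_iff.mpr ⟨Equiv.refl (Fin n)⟩)
              (fun σ : Equiv.Perm (Fin n) => ∑ i, w i * R i (σ i))} = 0
      ↔ ∃ (v w : Fin n → ℝ), (∀ i, 0 ≤ w i) ∧ (∃ i, w i ≠ 0) ∧
          ∀ i j, v j - v i ≤ w i * R i j := by
  have : Nonempty (Fin n) := ⟨⟨0, hn⟩⟩
  have hS : {x : ℝ | ∃ w : Fin n → ℝ, (∀ i, 0 ≤ w i) ∧ (∑ i, w i = 1) ∧ x = assignmentMin R w}
      = assignmentMin R '' stdSimplex ℝ (Fin n) :=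
    Set.ext fun _ => ⟨fun ⟨w, h0, h1, hx⟩ => ⟨w, ⟨h0, h1⟩, hx.symm⟩,
      fun ⟨w, ⟨h0, h1⟩, hx⟩ => ⟨w, h0, h1, hx.symm⟩⟩
  have hpot (w : Fin n → ℝ) := exists_potential_iff_forall_perm_sum_nonneg
    (c := fun i j => w i * R i j) (by simp [hdiag])
  simp only [inf'_perm_sum_eq_assignmentMin]
  rw [hS, sSup_image_assignmentMin_eq_zero_iff R hdiag]
  constructor
  · rintro ⟨w, ⟨hw0, hw1⟩, hw⟩
    obtain ⟨v, hv⟩ := (hpot w).2 hw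
    obtain ⟨i, -, hi⟩ := exists_ne_zero_of_sum_ne_zero (hw1 ▸ one_ne_zero)
    exact ⟨v, w, hw0, ⟨i, hi⟩, hv⟩
  · rintro ⟨v, w, hw0, ⟨i, hi⟩, hv⟩
    have hW : 0 < ∑ i, w i := sum_pos' (fun i _ => hw0 i) ⟨i, mem_univ i, (hw0 i).lt_of_ne' hi⟩
    refine ⟨(∑ i, w i)⁻¹ • w, ⟨fun i => mul_nonneg (inv_nonneg.2 hW.le) (hw0 i), ?_⟩, fun σ => ?_⟩
    · simp [← mul_sum, hW.ne']
    · simp only [Pi.smul_apply, smul_eq_mul, mul_assoc, ← mul_sum]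
      exact mul_nonneg (inv_nonneg.2 hW.le) ((hpot w).1 ⟨v, hv⟩ σ)
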